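/- arXiv:1503.02207 — 2 statements merged into one kernel-verified Lean document; each statement's English description precedes it below -/
import Mathlib

section
/- Let q be a prime power, ℓ ≤ m be positive integers, and 1 ≤ t ≤ ℓ. The function on Mat_{ℓ×m}(F_q) assigning to each F the number of matrices M ∈ Mat_{ℓ×m}(F_q) with rank(M) ≤ t and trace(Fᵀ M) ≠ 0 takes at most ℓ + 1 distinct values; that is, the determinantal code C(t;ℓ,m) has at most ℓ + 1 distinct weights. -/
/-!
The general linear groups act on coefficient matrices by `F ↦ A * F * B`. Since the substitution
`M ↦ Aᵀ * M * Bᵀ` preserves rank and `trace ((A * F * B)ᵀ * M) = trace (Fᵀ * (Aᵀ * M * Bᵀ))`,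
the weight of `F` is an invariant of this action. Two matrices of the same rank lie in the same
orbit, hence the weight of an `ℓ × m` matrix depends only on its rank, which takes one of the
`ℓ + 1` values `0, …, ℓ`.
-/

open Matrix Module Submodule

theorem Function.FactorsThrough.ncard_range_le {α β γ : Type*} [Nonempty γ] {f : α → β}
    {g : α → γ} (h : g.FactorsThrough f) (hf : (Set.range f).Finite) :
    (Set.range g).ncard ≤ (Set.range f).ncard := by
  obtain ⟨e, rfl⟩ := (Function.factorsThrough_iff g).1 h
  rw [Set.range_comp]
  exact Set.ncard_image_le hf

namespace LinearMap

variable {K V W : Type*} [Field K] [AddCommGroup V] [Module K V] [AddCommGroup W] [Module K W]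

noncomputable def complKerEquivRange (f : V →ₗ[K] W) {C : Submodule K V}
    (h : IsCompl (ker f) C) : C ≃ₗ[K] range f :=
  (quotientEquivOfIsCompl _ _ h).symm ≪≫ₗ f.quotKerEquivRange

@[simp]
theorem coe_complKerEquivRange_apply (f : V →ₗ[K] W) {C : Submodule K V}
    (h : IsCompl (ker f) C) (c : C) : (f.complKerEquivRange h c : W) = f c :=
  rfl

theorem exists_linearEquiv_comp_comp_eq_of_finrank_range_eq [FiniteDimensional K V]
    [FiniteDimensional K W] (f g : V →ₗ[K] W) (h : finrank K (range f) = finrank K (range g)) :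
    ∃ (eV : V ≃ₗ[K] V) (eW : W ≃ₗ[K] W), eW.toLinearMap ∘ₗ f ∘ₗ eV.toLinearMap = g := by
  obtain ⟨Cf, hCf⟩ := (ker f).exists_isCompl
  obtain ⟨Cg, hCg⟩ := (ker g).exists_isCompl
  obtain ⟨Df, hDf⟩ := (range f).exists_isCompl
  obtain ⟨Dg, hDg⟩ := (range g).exists_isCompl
  have hker : finrank K (ker g) = finrank K (ker f) := by
    have := f.finrank_range_add_finrank_ker
    have := g.finrank_range_add_finrank_ker
    omega
  have hcoker : finrank K Df = finrank K Dg := by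
    have := finrank_add_eq_of_isCompl hDf
    have := finrank_add_eq_of_isCompl hDg
    omega
  let σ : range f ≃ₗ[K] range g := .ofFinrankEq _ _ h
  -- `eV` sends `ker g` onto `ker f`, and `Cg` onto `Cf` so that `f ∘ eV = σ⁻¹ ∘ g` there
  let eV : V ≃ₗ[K] V := (prodEquivOfIsCompl _ _ hCg).symm ≪≫ₗ
    (LinearEquiv.ofFinrankEq _ _ hker).prodCongr
      (g.complKerEquivRange hCg ≪≫ₗ σ.symm ≪≫ₗ (f.complKerEquivRange hCf).symm) ≪≫ₗ
    prodEquivOfIsCompl _ _ hCf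
  let eW : W ≃ₗ[K] W := (prodEquivOfIsCompl _ _ hDf).symm ≪≫ₗ
    σ.prodCongr (.ofFinrankEq _ _ hcoker) ≪≫ₗ prodEquivOfIsCompl _ _ hDg
  refine ⟨eV, eW, ?_⟩
  have hker_map (k : ker g) : f (LinearEquiv.ofFinrankEq _ _ hker k : V) = 0 :=
    (LinearEquiv.ofFinrankEq _ _ hker k).2
  have hlift (y : range f) : f ((f.complKerEquivRange hCf).symm y) = y := by
    rw [← f.coe_complKerEquivRange_apply hCf, LinearEquiv.apply_symm_apply]
  ext x
  obtain ⟨k, c, rfl, -⟩ := existsUnique_add_of_isCompl hCg x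
  simp [eV, eW, σ, hker_map, hlift]

end LinearMap

namespace Matrix

variable {K m n : Type*} [Field K] [Fintype m] [Fintype n]

theorem exists_isUnit_mul_mul_eq_of_rank_eq [DecidableEq m] [DecidableEq n]
    {F G : Matrix m n K} (h : F.rank = G.rank) :
    ∃ (A : Matrix m m K) (B : Matrix n n K), IsUnit A ∧ IsUnit B ∧ A * F * B = G := by
  obtain ⟨eV, eW, he⟩ :=
    (toLin' F).exists_linearEquiv_comp_comp_eq_of_finrank_range_eq (toLin' G) h
  refine ⟨LinearMap.toMatrix' eW.toLinearMap, LinearMap.toMatrix' eV.toLinearMap,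
    LinearMap.isUnit_toMatrix'_iff.2 ((Module.End.isUnit_iff _).2 eW.bijective),
    LinearMap.isUnit_toMatrix'_iff.2 ((Module.End.isUnit_iff _).2 eV.bijective), ?_⟩
  rw [← LinearMap.toMatrix'_toLin' F, ← LinearMap.toMatrix'_comp, ← LinearMap.toMatrix'_comp,
    LinearMap.comp_assoc, he, LinearMap.toMatrix'_toLin']

noncomputable def detCodeWeight (t : ℕ) (F : Matrix m n K) : ℕ :=
  Nat.card {M : Matrix m n K // M.rank ≤ t ∧ trace (Fᵀ * M) ≠ 0}

theorem detCodeWeight_mul_mul [DecidableEq m] [DecidableEq n] (t : ℕ) (F : Matrix m n K)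
    {A : Matrix m m K} {B : Matrix n n K} (hA : IsUnit A) (hB : IsUnit B) :
    detCodeWeight t (A * F * B) = detCodeWeight t F := by
  obtain ⟨P, hP⟩ := (isUnit_transpose A).2 hA
  obtain ⟨Q, hQ⟩ := (isUnit_transpose B).2 hB
  let e : Matrix m n K ≃ Matrix m n K :=
    { toFun := fun M => (P : Matrix m m K) * M * (Q : Matrix n n K)
      invFun := fun M => (↑P⁻¹ : Matrix m m K) * M * (↑Q⁻¹ : Matrix n n K)
      left_inv := fun M => by simp [← Matrix.mul_assoc]
      right_inv := fun M => by simp [← Matrix.mul_assoc] }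
  have hrank (M : Matrix m n K) : (e M).rank = M.rank := by
    rw [Equiv.coe_fn_mk, rank_mul_eq_left_of_isUnit_det _ _ ((isUnit_iff_isUnit_det _).1 Q.isUnit),
      rank_mul_eq_right_of_isUnit_det _ _ ((isUnit_iff_isUnit_det _).1 P.isUnit)]
  have htrace (M : Matrix m n K) : trace ((A * F * B)ᵀ * M) = trace (Fᵀ * e M) := by
    simp only [e, Equiv.coe_fn_mk, hP, hQ, transpose_mul, Matrix.mul_assoc]
    rw [trace_mul_comm]
    simp only [Matrix.mul_assoc]
  exact Nat.card_congr (e.subtypeEquiv fun M => by rw [hrank, htrace])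

theorem detCodeWeight_eq_of_rank_eq [DecidableEq m] [DecidableEq n] (t : ℕ)
    {F G : Matrix m n K} (h : F.rank = G.rank) : detCodeWeight t F = detCodeWeight t G := by
  obtain ⟨A, B, hA, hB, rfl⟩ := exists_isUnit_mul_mul_eq_of_rank_eq h
  exact (detCodeWeight_mul_mul t F hA hB).symm

end Matrix

theorem det_code_few_weights_general (K : Type*) [Field K] (ℓ m t : ℕ) :
    (Set.range (fun F : Matrix (Fin ℓ) (Fin m) K =>
      Nat.card {M : Matrix (Fin ℓ) (Fin m) K // M.rank ≤ t ∧ Matrix.trace (Fᵀ * M) ≠ 0})).ncard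
      ≤ ℓ + 1 := by
  have hfactor : (detCodeWeight t : Matrix (Fin ℓ) (Fin m) K → ℕ).FactorsThrough rank :=
    fun _ _ h => detCodeWeight_eq_of_rank_eq t h
  have hrank : Set.range (rank : Matrix (Fin ℓ) (Fin m) K → ℕ) ⊆ Set.Iic ℓ :=
    Set.range_subset_iff.2 rank_le_height
  calc (Set.range (detCodeWeight t : Matrix (Fin ℓ) (Fin m) K → ℕ)).ncard
      ≤ (Set.range (rank : Matrix (Fin ℓ) (Fin m) K → ℕ)).ncard :=
        hfactor.ncard_range_le ((Set.finite_Iic ℓ).subset hrank)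
    _ ≤ (Set.Iic ℓ).ncard := Set.ncard_le_ncard hrank (Set.finite_Iic ℓ)
    _ = ℓ + 1 := by simp

/-- The determinantal code `C(t; ℓ, m)` has at most `ℓ + 1` distinct weights: the function
assigning to each coefficient matrix `F` the number of matrices `M` of rank at most `t` with
`trace (Fᵀ * M) ≠ 0` takes at most `ℓ + 1` distinct values. -/
theorem det_code_few_weights (K : Type*) [Field K] [Fintype K] (q ℓ m t : ℕ)
    (hq : Fintype.card K = q) (hℓ : 0 < ℓ) (hℓm : ℓ ≤ m) (ht1 : 1 ≤ t) (htℓ : t ≤ ℓ) :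
    (Set.range (fun F : Matrix (Fin ℓ) (Fin m) K =>
      Nat.card {M : Matrix (Fin ℓ) (Fin m) K // M.rank ≤ t ∧ Matrix.trace (Fᵀ * M) ≠ 0})).ncard
      ≤ ℓ + 1 :=
  det_code_few_weights_general K ℓ m t
end

section
/- Let q be a prime power and ℓ ≤ m be positive integers. The minimum over all nonzero F ∈ Mat_{ℓ×m}(F_q) of the number of matrices M ∈ Mat_{ℓ×m}(F_q) with rank(M) = 1 and trace(Fᵀ M) ≠ 0 equals q^{ℓ+m−2}(q − 1); that is, this value is attained by some nonzero F, and every nonzero F gives a count at least q^{ℓ+m−2}(q − 1). In other words, the minimum distance of the determinantal code C(1;ℓ,m) is q^{ℓ+m−2}(q − 1). -/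
/-!
A rank-one matrix is `vecMulVec u v` with `(u, v)` determined up to `(c • u, c⁻¹ • v)`, `c ∈ Kˣ`,
and `trace (Fᵀ * vecMulVec u v) = (Fᵀ *ᵥ u) ⬝ᵥ v`. Counting pairs with `Fᵀ *ᵥ u ≠ 0` and `v` off
the hyperplane `(Fᵀ *ᵥ u)⊥`, then dividing by `q - 1`, the weight of `F` is
`(q ^ ℓ - q ^ (ℓ - rank F)) * q ^ (m - 1)`. It increases with `rank F`, so the minimum over
`F ≠ 0` is attained at rank one.
-/

open Matrix Module

theorem Nat.card_subtype_comp_eq_mul_of_card_fiber {α β : Type*} [Finite α] [Finite β]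
    (g : α → β) {P : β → Prop} {k : ℕ} (hk : ∀ b, P b → Nat.card {a // g a = b} = k) :
    Nat.card {a // P (g a)} = Nat.card {b // P b} * k := by
  have := Fintype.ofFinite {b // P b}
  rw [← Nat.card_congr (Equiv.sigmaSubtypeFiberEquivSubtype g fun _ => Iff.rfl), Nat.card_sigma,
    Finset.sum_congr rfl fun (b : {b // P b}) _ => hk b b.2, Finset.sum_const, smul_eq_mul,
    Finset.card_univ, Nat.card_eq_fintype_card]

theorem Nat.pow_sub_pow_pred (q : ℕ) {b : ℕ} (hb : 0 < b) :
    q ^ b - q ^ (b - 1) = q ^ (b - 1) * (q - 1) := by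
  obtain ⟨c, rfl⟩ := Nat.exists_eq_add_of_lt hb
  simp [pow_succ, Nat.mul_sub]

section FiniteField

variable {K : Type*} [Field K] [Finite K]

theorem LinearMap.natCard_apply_ne_zero {V W : Type*} [AddCommGroup V] [Module K V]
    [Module.Finite K V] [AddCommGroup W] [Module K W] (f : V →ₗ[K] W) :
    Nat.card {x // f x ≠ 0} = Nat.card K ^ finrank K V - Nat.card K ^ finrank K (ker f) := by
  classical
  have := Module.finite_of_finite K (M := V)
  have := Fintype.ofFinite V
  rw [← Module.natCard_eq_pow_finrank, ← Module.natCard_eq_pow_finrank, Nat.card_eq_fintype_card,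
    Fintype.card_subtype_compl, Nat.card_eq_fintype_card, Nat.card_eq_fintype_card]
  rfl

theorem Matrix.natCard_dotProduct_ne_zero {n : Type*} [Fintype n] {w : n → K} (hw : w ≠ 0) :
    Nat.card {v : n → K // w ⬝ᵥ v ≠ 0} =
      Nat.card K ^ Fintype.card n - Nat.card K ^ (Fintype.card n - 1) := by
  have hf : dotProductBilin K K w ≠ 0 := fun h => hw (dotProduct_eq_zero w fun v => congr($h v))
  have hker := Module.Dual.finrank_ker_add_one_of_ne_zero hf
  rw [finrank_fintype_fun_eq_card] at hker
  rw [show Fintype.card n - 1 = finrank K (LinearMap.ker (dotProductBilin K K w)) by omega,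
    ← finrank_fintype_fun_eq_card K]
  exact (dotProductBilin K K w).natCard_apply_ne_zero

end FiniteField

namespace Matrix

variable {K : Type*} [Field K] {m n : Type*}

theorem exists_units_of_vecMulVec_eq {u u' : m → K} {v v' : n → K} (hu : u ≠ 0) (hv : v ≠ 0)
    (h : vecMulVec u' v' = vecMulVec u v) : ∃ c : Kˣ, u' = c • u ∧ v' = c⁻¹ • v := by
  obtain ⟨i, hi : u i ≠ 0⟩ := Function.ne_iff.mp hu
  obtain ⟨j, hj : v j ≠ 0⟩ := Function.ne_iff.mp hv
  have hentry (k : m) (l : n) : u' k * v' l = u k * v l := congr($h k l)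
  have hu'i : u' i ≠ 0 := fun h0 => mul_ne_zero hi hj (by rw [← hentry, h0, zero_mul])
  have hv'j : v' j ≠ 0 := fun h0 => mul_ne_zero hi hj (by rw [← hentry, h0, mul_zero])
  refine ⟨Units.mk0 (u' i / u i) (div_ne_zero hu'i hi), funext fun k => ?_, funext fun l => ?_⟩
  · simp only [Pi.smul_apply, Units.smul_mk0, smul_eq_mul]
    field_simp
    apply mul_right_cancel₀ hv'j
    linear_combination u i * hentry k j - u k * hentry i j
  · simp only [Pi.smul_apply, Units.smul_def, Units.val_inv_eq_inv_val, Units.val_mk0, smul_eq_mul]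
    field_simp
    linear_combination hentry i l

variable [Fintype n]

theorem rank_eq_zero_iff {M : Matrix m n K} : M.rank = 0 ↔ M = 0 := by
  classical
  rw [rank, Submodule.finrank_eq_zero, LinearMap.range_eq_bot, ← toLin'_apply',
    LinearEquiv.map_eq_zero_iff]

theorem rank_vecMulVec_of_ne_zero {u : m → K} {v : n → K} (hu : u ≠ 0) (hv : v ≠ 0) :
    (vecMulVec u v).rank = 1 := by
  obtain ⟨i, hi : u i ≠ 0⟩ := Function.ne_iff.mp hu
  obtain ⟨j, hj : v j ≠ 0⟩ := Function.ne_iff.mp hv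
  have : (vecMulVec u v).rank ≠ 0 := fun h =>
    mul_ne_zero hi hj congr($(rank_eq_zero_iff.mp h) i j)
  have := rank_vecMulVec_le u v
  omega

theorem exists_eq_vecMulVec_of_rank_eq_one {M : Matrix m n K} (hM : M.rank = 1) :
    ∃ u v, M = vecMulVec u v := by
  classical
  obtain ⟨w, -, hw⟩ := finrank_eq_one_iff'.mp hM
  have hcol (j : n) : ∃ c : K, c • (w : m → K) = Mᵀ j := by
    obtain ⟨c, hc⟩ := hw ⟨Mᵀ j, Pi.single j 1, mulVec_single_one M j⟩
    exact ⟨c, congr(Subtype.val $hc)⟩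
  choose c hc using hcol
  refine ⟨w, c, ext fun i j => ?_⟩
  rw [vecMulVec_apply, ← transpose_apply M, ← hc j, Pi.smul_apply, smul_eq_mul, mul_comm]

theorem natCard_vecMulVec_eq [Finite K] {M : Matrix m n K} (hM : M.rank = 1) :
    Nat.card {p : (m → K) × (n → K) // vecMulVec p.1 p.2 = M} = Nat.card K - 1 := by
  obtain ⟨u, v, rfl⟩ := exists_eq_vecMulVec_of_rank_eq_one hM
  have hM0 : vecMulVec u v ≠ 0 := fun h => by simp [h, rank_zero] at hM
  have hu : u ≠ 0 := by rintro rfl; exact hM0 (ext fun _ _ => zero_mul _)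
  have hv : v ≠ 0 := by rintro rfl; exact hM0 (ext fun _ _ => mul_zero _)
  let e (c : Kˣ) : {p : (m → K) × (n → K) // vecMulVec p.1 p.2 = vecMulVec u v} :=
    ⟨(c • u, c⁻¹ • v), by
      ext i j
      simp only [vecMulVec_apply, Pi.smul_apply, Units.smul_def, Units.val_inv_eq_inv_val,
        smul_eq_mul]
      field_simp⟩
  have he : Function.Bijective e := by
    refine ⟨fun c c' hcc' => Units.ext (smul_left_injective K hu ?_), fun p => ?_⟩
    · exact congr(($hcc').1.1)
    · obtain ⟨c, hc1, hc2⟩ := exists_units_of_vecMulVec_eq hu hv p.2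
      exact ⟨c, Subtype.ext (Prod.ext hc1.symm hc2.symm)⟩
  rw [← Nat.card_units, Nat.card_eq_of_bijective e he]

theorem trace_transpose_mul_vecMulVec [Fintype m] (F : Matrix m n K) (u : m → K) (v : n → K) :
    trace (Fᵀ * vecMulVec u v) = (Fᵀ *ᵥ u) ⬝ᵥ v := by
  rw [mul_vecMulVec, trace_vecMulVec]

variable [Finite K]

theorem natCard_mulVec_ne_zero (A : Matrix m n K) :
    Nat.card {v : n → K // A *ᵥ v ≠ 0} =
      Nat.card K ^ Fintype.card n - Nat.card K ^ (Fintype.card n - A.rank) := by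
  have hker := A.mulVecLin.finrank_range_add_finrank_ker
  rw [finrank_fintype_fun_eq_card] at hker
  rw [show Fintype.card n - A.rank = finrank K (LinearMap.ker A.mulVecLin) by rw [rank]; omega,
    ← finrank_fintype_fun_eq_card K]
  exact A.mulVecLin.natCard_apply_ne_zero

theorem natCard_trace_transpose_mul_vecMulVec_ne_zero [Fintype m] (F : Matrix m n K) :
    Nat.card {p : (m → K) × (n → K) // trace (Fᵀ * vecMulVec p.1 p.2) ≠ 0} =
      (Nat.card K ^ Fintype.card m - Nat.card K ^ (Fintype.card m - F.rank)) *
        (Nat.card K ^ Fintype.card n - Nat.card K ^ (Fintype.card n - 1)) := by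
  classical
  have := Fintype.ofFinite K
  simp_rw [trace_transpose_mul_vecMulVec]
  rw [Nat.card_congr (Equiv.subtypeProdEquivSigmaSubtype fun u v => (Fᵀ *ᵥ u) ⬝ᵥ v ≠ 0),
    Nat.card_sigma]
  have hfiber (u : m → K) : Nat.card {v : n → K // (Fᵀ *ᵥ u) ⬝ᵥ v ≠ 0} =
      if Fᵀ *ᵥ u ≠ 0 then Nat.card K ^ Fintype.card n - Nat.card K ^ (Fintype.card n - 1)
      else 0 := by
    split_ifs with hu
    · exact natCard_dotProduct_ne_zero hu
    · rw [not_not] at hu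
      simp [hu]
  rw [Finset.sum_congr rfl fun u _ => hfiber u, Finset.sum_ite, Finset.sum_const_zero, add_zero,
    Finset.sum_const, smul_eq_mul, ← Fintype.card_subtype, ← Nat.card_eq_fintype_card,
    natCard_mulVec_ne_zero, rank_transpose]

theorem natCard_rank_eq_one_trace_ne_zero [Fintype m] [Nonempty n] (F : Matrix m n K) :
    Nat.card {M : Matrix m n K // M.rank = 1 ∧ trace (Fᵀ * M) ≠ 0} =
      (Nat.card K ^ Fintype.card m - Nat.card K ^ (Fintype.card m - F.rank)) *
        Nat.card K ^ (Fintype.card n - 1) := by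
  have hunits : 0 < Nat.card K - 1 := by have := Finite.one_lt_card (α := K); omega
  have hrank (p : (m → K) × (n → K)) (hp : trace (Fᵀ * vecMulVec p.1 p.2) ≠ 0) :
      (vecMulVec p.1 p.2).rank = 1 := by
    rw [trace_transpose_mul_vecMulVec] at hp
    refine rank_vecMulVec_of_ne_zero ?_ ?_ <;> rintro h <;> simp [h] at hp
  apply Nat.eq_of_mul_eq_mul_right hunits
  rw [← Nat.card_subtype_comp_eq_mul_of_card_fiber
      (fun p : (m → K) × (n → K) => vecMulVec p.1 p.2) fun M hM => natCard_vecMulVec_eq hM.1,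
    Nat.card_congr (Equiv.subtypeEquivRight fun p => and_iff_right_of_imp (hrank p)),
    natCard_trace_transpose_mul_vecMulVec_ne_zero, Nat.pow_sub_pow_pred _ Fintype.card_pos,
    mul_assoc]

end Matrix

/-- The minimum distance of the determinantal code `C(1; ℓ, m)` is `q ^ (ℓ + m - 2) * (q - 1)`:
this value is the least element of the set of weights of nonzero codewords, i.e. of the set of
counts of rank-one matrices `M` with `trace (Fᵀ * M) ≠ 0`, over nonzero `F`. -/
theorem det_code_min_distance_t_one (K : Type*) [Field K] [Fintype K] (q ℓ m : ℕ)
    (hq : Fintype.card K = q) (hℓ : 0 < ℓ) (hℓm : ℓ ≤ m) :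
    IsLeast {w : ℕ | ∃ F : Matrix (Fin ℓ) (Fin m) K, F ≠ 0 ∧
        w = Nat.card {M : Matrix (Fin ℓ) (Fin m) K // M.rank = 1 ∧ Matrix.trace (Fᵀ * M) ≠ 0}}
      (q ^ (ℓ + m - 2) * (q - 1)) := by
  subst hq
  have : Nonempty (Fin ℓ) := ⟨⟨0, hℓ⟩⟩
  have : Nonempty (Fin m) := ⟨⟨0, by omega⟩⟩
  have hweight (F : Matrix (Fin ℓ) (Fin m) K) :
      Nat.card {M : Matrix (Fin ℓ) (Fin m) K // M.rank = 1 ∧ trace (Fᵀ * M) ≠ 0} =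
        (Fintype.card K ^ ℓ - Fintype.card K ^ (ℓ - F.rank)) * Fintype.card K ^ (m - 1) := by
    simpa [Nat.card_eq_fintype_card] using natCard_rank_eq_one_trace_ne_zero F
  have hmin : (Fintype.card K ^ ℓ - Fintype.card K ^ (ℓ - 1)) * Fintype.card K ^ (m - 1) =
      Fintype.card K ^ (ℓ + m - 2) * (Fintype.card K - 1) := by
    rw [Nat.pow_sub_pow_pred _ hℓ, mul_right_comm, ← pow_add]
    congr 2
    omega
  have hF₁ : (vecMulVec (1 : Fin ℓ → K) (1 : Fin m → K)).rank = 1 :=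
    rank_vecMulVec_of_ne_zero one_ne_zero one_ne_zero
  refine ⟨⟨vecMulVec 1 1, fun h => by simp [h, rank_zero] at hF₁, by rw [hweight, hF₁, hmin]⟩, ?_⟩
  rintro w ⟨F, hF, rfl⟩
  have hr : 1 ≤ F.rank := Nat.one_le_iff_ne_zero.mpr (mt rank_eq_zero_iff.mp hF)
  rw [hweight, ← hmin]
  gcongr
  exact Fintype.card_pos
end
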